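/- arXiv:1502.00817 — 2 statements merged into one kernel-verified Lean document; each statement's English description precedes it below -/
import Mathlib

section
/- Let F be a foliation on a smooth projective surface X with pseudo-effective canonical divisor K_F, Zariski decomposition K_F = P + N, and let ε: X → Y contract exactly the support of N. If C is a curve on X with P·C = 0 and C is not F-invariant, and if the pushforward K̄ = ε_*K_F satisfies (K̄ + C̄)·C̄ ≥ 0 for C̄ = ε_*C (where P = ε*K̄ and K̄ is big), then a contradiction arises: C̄² < 0 since K̄ is big and K̄·C̄ = 0, yet C̄² = (K̄+C̄)·C̄ ≥ 0. Hence any curve C with P·C = 0 is F-invariant. -/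
/-- for a relatively minimal foliation of general type with Zariski
decomposition `K_F = P + N` and `ε : X → Y` the contraction of `Supp N`, with
`P = ε^* K̄` (`K̄ = ε_* K_F` big) and `(K̄ + C̄)·C̄ ≥ 0` for every non-invariant
curve `C`, any curve `C` with `P·C = 0` is `F`-invariant (otherwise `C̄² < 0`
from bigness and `C̄² ≥ 0` from the inequality give a contradiction). -/
theorem stmt3
    {V W : Type} [AddCommGroup V] [Module ℚ V] [AddCommGroup W] [Module ℚ W]
    (iX : V →ₗ[ℚ] V →ₗ[ℚ] ℚ) (iY : W →ₗ[ℚ] W →ₗ[ℚ] ℚ)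
    (push : V →ₗ[ℚ] W) (pull : W →ₗ[ℚ] V)
    (hproj : ∀ (a : W) (x : V), iX (pull a) x = iY a (push x))
    (KF P N : V) (Kbar : W)
    (IsCurve Invariant : V → Prop)
    (RelativelyMinimal GeneralType : Prop)
    (hrm : RelativelyMinimal) (hgt : GeneralType)
    (hzar : KF = P + N)
    (hKbar : Kbar = push KF)
    (hP : P = pull Kbar)
    -- `K̄` is big: it has positive intersection with any curve class of
    -- non-negative self-intersection; equivalently `K̄·C̄ = 0` forces `C̄² < 0`
    (hbig : ∀ C, IsCurve C → iY Kbar (push C) = 0 → iY (push C) (push C) < 0)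
    -- Proposition `lemmaneg`: `(K̄ + C̄)·C̄ ≥ 0` for non-invariant curves
    (hlemmaneg : ∀ C, IsCurve C → ¬ Invariant C → 0 ≤ iY (Kbar + push C) (push C)) :
    ∀ C, IsCurve C → iX P C = 0 → Invariant C := by
  intro C hC hPC
  by_contra hinv
  have h0 : iY Kbar (push C) = 0 := by
    rw [hP] at hPC; rw [← hproj]; exact hPC
  have h1 := hbig C hC h0
  have h2 := hlemmaneg C hC hinv
  rw [map_add, LinearMap.add_apply, h0, zero_add] at h2
  linarith
end

section
/- With notation as in the canonical bundle formula for an elliptic fibration f: X → C induced by a foliation with reduced singularities: the divisor Ψ = f*(B_C) + E + Σ(1−l_D)D is effective and its support contains no full fibre of f; more precisely, for each p ∈ C and each prime divisor D ⊆ f⁻¹(p), the coefficient of Ψ along D equals 1 + a_D − l_D·γ_p ≥ 0, with equality exactly when D computes the log canonical threshold at p. -/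
/-- the divisor `Ψ = f^* B_C + E + Σ(1 - l_D) D` supported on the
fibre over `p` has coefficient `1 + a_D - l_D·γ_p` along each component `D`;
this coefficient is `≥ 0`, vanishes exactly when `D` computes the log canonical
threshold `γ_p = min (1 + a_D)/l_D`, and some component has coefficient `0`
(so no full fibre lies in `Supp Ψ`). -/
theorem stmt7
    (ι : Type) [Fintype ι] [Nonempty ι]           -- components of f⁻¹(p)
    (a : ι → ℚ) (l : ι → ℕ)                        -- discrepancies, multiplicities
    (ha : ∀ i, 0 ≤ a i) (hl : ∀ i, 1 ≤ l i)
    (γp : ℚ)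
    (hγ : IsLeast (Set.range fun i => (1 + a i) / (l i : ℚ)) γp)
    (bp : ℚ) (hbp : bp = 1 - γp)                   -- coefficient of B_C at p
    (Ψcoeff : ι → ℚ)
    (hΨ : ∀ i, Ψcoeff i = bp * l i + a i + (1 - (l i : ℚ))) :
    (∀ i, Ψcoeff i = 1 + a i - (l i : ℚ) * γp) ∧
    (∀ i, 0 ≤ Ψcoeff i) ∧
    (∀ i, Ψcoeff i = 0 ↔ (1 + a i) / (l i : ℚ) = γp) ∧
    (∃ i, Ψcoeff i = 0) := by
  have hlpos : ∀ i, (0 : ℚ) < (l i : ℚ) := fun i => by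
    exact_mod_cast Nat.lt_of_lt_of_le Nat.zero_lt_one (hl i)
  have hform : ∀ i, Ψcoeff i = 1 + a i - (l i : ℚ) * γp := fun i => by
    rw [hΨ i, hbp]; ring
  have hle : ∀ i, γp ≤ (1 + a i) / (l i : ℚ) := fun i =>
    hγ.2 ⟨i, rfl⟩
  have hnn : ∀ i, 0 ≤ Ψcoeff i := fun i => by
    rw [hform i]
    have := (le_div_iff₀ (hlpos i)).mp (hle i)
    linarith
  have hiff : ∀ i, Ψcoeff i = 0 ↔ (1 + a i) / (l i : ℚ) = γp := fun i => by
    rw [hform i, div_eq_iff (hlpos i).ne']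
    constructor <;> intro h <;> linarith [h]
  refine ⟨hform, hnn, hiff, ?_⟩
  obtain ⟨i, hi⟩ := hγ.1
  exact ⟨i, (hiff i).mpr hi⟩
end
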